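/- arXiv:0908.2738 — 4 statements merged into one kernel-verified Lean document; each statement's English description precedes it below -/
import Mathlib

section
/- Let μ ∈ L¹_res and ν ∈ gl_res. Then both products μν and νμ belong to L¹_res (i.e. L¹_res is a two-sided ideal of the associative algebra gl_res). -/
/-!
Splitting at `1 = P + (1 - P)` gives `(xy)_{ac} = x_{a+} y_{+c} + x_{a-} y_{-c}` for the blocks of
a product. The off-diagonal blocks of `ν ∈ gl_res` are Hilbert–Schmidt, so every term of a block
of `μν` or `νμ` is trace class times bounded, or Hilbert–Schmidt times Hilbert–Schmidt: both
classes are two-sided ideals and HS·HS is trace class. The one non-formal point is that a sum of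
trace-class operators is trace class: `A₁B₁ + A₂B₂ = (A₁V* + A₂W*)(VB₁ + WB₂)` for isometries
`V`, `W` with orthogonal ranges, which exist because `ι ⊕ ι ≃ ι` for infinite `ι`.
-/

noncomputable section

variable {H : Type*} [NormedAddCommGroup H] [InnerProductSpace ℂ H] [CompleteSpace H]

/-- Hilbert–Schmidt operator (with respect to the Hilbert basis `b`). -/
def IsHS {ι : Type*} (b : HilbertBasis ι ℂ H) (T : H →L[ℂ] H) : Prop :=
  Summable fun i => ‖T (b i)‖ ^ 2

/-- Trace-class operator: a product of two Hilbert–Schmidt operators. -/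
def IsTC {ι : Type*} (b : HilbertBasis ι ℂ H) (T : H →L[ℂ] H) : Prop :=
  ∃ A B : H →L[ℂ] H, IsHS b A ∧ IsHS b B ∧ T = A * B

/-- The trace with respect to the Hilbert basis `b`. -/
def trB {ι : Type*} (b : HilbertBasis ι ℂ H) (T : H →L[ℂ] H) : ℂ :=
  ∑' i, (inner ℂ (b i) (T (b i)) : ℂ)

/-- Membership in the restricted algebra `gl_res`: the commutator `[T, P]` is
Hilbert–Schmidt. -/
def InGlres {ι : Type*} (b : HilbertBasis ι ℂ H) (P T : H →L[ℂ] H) : Prop :=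
  IsHS b (T * P - P * T)

/-- Membership in `L¹_res`: the diagonal blocks `T₊₊ = P T P`, `T₋₋ = (1-P) T (1-P)`
are trace class and the off-diagonal blocks `T₊₋ = P T (1-P)`, `T₋₊ = (1-P) T P`
are Hilbert–Schmidt. -/
def InL1res {ι : Type*} (b : HilbertBasis ι ℂ H) (P T : H →L[ℂ] H) : Prop :=
  IsTC b (P * T * P) ∧ IsTC b ((1 - P) * T * (1 - P)) ∧
    IsHS b (P * T * (1 - P)) ∧ IsHS b ((1 - P) * T * P)

/-- The restricted trace `Tr_res T = Tr T₊₊ + Tr T₋₋`. -/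
def trRes {ι : Type*} (b : HilbertBasis ι ℂ H) (P T : H →L[ℂ] H) : ℂ :=
  trB b (P * T * P) + trB b ((1 - P) * T * (1 - P))

open ContinuousLinearMap

theorem HilbertBasis.hasSum_norm_inner_sq {𝕜 E ι : Type*} [RCLike 𝕜] [NormedAddCommGroup E]
    [InnerProductSpace 𝕜 E] (b : HilbertBasis ι 𝕜 E) (x : E) :
    HasSum (fun i => ‖(inner 𝕜 (b i) x : 𝕜)‖ ^ 2) (‖x‖ ^ 2) := by
  simpa only [ENNReal.toReal_ofNat, Real.rpow_two, LinearIsometryEquiv.norm_map,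
    HilbertBasis.repr_apply_apply] using lp.hasSum_norm (p := 2) (by norm_num) (b.repr x)

theorem IsIdempotentElem.mul_mul_eq_add {R : Type*} [Ring R] {P : R} (hP : IsIdempotentElem P)
    (L X Y M : R) :
    L * (X * Y) * M = L * X * P * (P * Y * M) + L * X * (1 - P) * ((1 - P) * Y * M) := by
  calc L * (X * Y) * M = L * X * (P * P) * Y * M + L * X * ((1 - P) * (1 - P)) * Y * M := by
        rw [hP.eq, hP.one_sub.eq]; noncomm_ring
    _ = _ := by noncomm_ring

section HilbertSchmidt

variable {E ι : Type*} [NormedAddCommGroup E] [InnerProductSpace ℂ E] {b : HilbertBasis ι ℂ E}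

theorem isHS_iff_summable_inner (T : E →L[ℂ] E) :
    IsHS b T ↔ Summable fun p : ι × ι => ‖(inner ℂ (b p.2) (T (b p.1)) : ℂ)‖ ^ 2 := by
  rw [summable_prod_of_nonneg fun _ => by positivity]
  simp only [fun i => (b.hasSum_norm_inner_sq (T (b i))).tsum_eq,
    fun i => (b.hasSum_norm_inner_sq (T (b i))).summable, implies_true, true_and, IsHS]

namespace IsHS

theorem of_finite [Finite ι] (T : E →L[ℂ] E) : IsHS b T := Summable.of_finite

theorem neg {T : E →L[ℂ] E} (hT : IsHS b T) : IsHS b (-T) := by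
  simpa [IsHS] using hT

theorem add {S T : E →L[ℂ] E} (hS : IsHS b S) (hT : IsHS b T) : IsHS b (S + T) := by
  refine .of_nonneg_of_le (fun i => by positivity) (fun i => ?_)
    ((Summable.mul_left 2 hS).add (Summable.mul_left 2 hT))
  have h := norm_add_le (S (b i)) (T (b i))
  rw [← add_apply] at h
  nlinarith [norm_nonneg ((S + T) (b i)), sq_nonneg (‖S (b i)‖ - ‖T (b i)‖)]

theorem mul_left (C : E →L[ℂ] E) {T : E →L[ℂ] E} (hT : IsHS b T) : IsHS b (C * T) := by
  refine .of_nonneg_of_le (fun i => by positivity) (fun i => ?_) (Summable.mul_left (‖C‖ ^ 2) hT)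
  calc ‖C (T (b i))‖ ^ 2 ≤ (‖C‖ * ‖T (b i)‖) ^ 2 := by gcongr; exact C.le_opNorm _
    _ = ‖C‖ ^ 2 * ‖T (b i)‖ ^ 2 := mul_pow _ _ _

variable [CompleteSpace E]

theorem adjoint {T : E →L[ℂ] E} (hT : IsHS b T) : IsHS b (adjoint T) := by
  rw [isHS_iff_summable_inner] at hT ⊢
  refine hT.prod_symm.congr fun p => ?_
  rw [adjoint_inner_right, norm_inner_symm]
  rfl

theorem mul_right {T : E →L[ℂ] E} (hT : IsHS b T) (C : E →L[ℂ] E) : IsHS b (T * C) := by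
  simpa [mul_def, adjoint_comp] using (hT.adjoint.mul_left (ContinuousLinearMap.adjoint C)).adjoint

end IsHS

end HilbertSchmidt

section Isometry

variable {𝕜 E ι : Type*} [RCLike 𝕜] [NormedAddCommGroup E] [InnerProductSpace 𝕜 E] [CompleteSpace E]

theorem ContinuousLinearMap.adjoint_mul_eq_of_inner {T S R : E →L[𝕜] E}
    (h : ∀ x y, inner 𝕜 (T x) (S y) = (inner 𝕜 x (R y) : 𝕜)) : adjoint T * S = R := by
  ext y
  refine ext_inner_left 𝕜 fun x => ?_
  rw [mul_apply_eq_comp, adjoint_inner_right, h]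

namespace HilbertBasis

variable (b : HilbertBasis ι 𝕜 E)

/-- The isometry sending `b i` to `b (f i)`. -/
def isometryOfEmbedding (f : ι ↪ ι) : E →ₗᵢ[𝕜] E :=
  (b.orthonormal.comp f f.injective).orthogonalFamily.linearIsometry.comp b.repr.toLinearIsometry

theorem inner_isometryOfEmbedding_eq_zero {f : ι ↪ ι} {k : ι} (hk : k ∉ Set.range f) (y : E) :
    inner 𝕜 (b k) ((b.isometryOfEmbedding f) y) = 0 := by
  have h := ((b.orthonormal.comp f f.injective).orthogonalFamily.hasSum_linearIsometry
    (b.repr y)).mapL (innerSL 𝕜 (b k))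
  refine h.unique (hasSum_zero.congr_fun fun j => ?_)
  rw [innerSL_apply_apply]
  simp [inner_smul_right, b.orthonormal.2 (fun hkj => hk ⟨j, hkj.symm⟩)]

theorem inner_isometryOfEmbedding_isometryOfEmbedding {f g : ι ↪ ι}
    (hfg : Disjoint (Set.range f) (Set.range g)) (x y : E) :
    inner 𝕜 ((b.isometryOfEmbedding f) x) ((b.isometryOfEmbedding g) y) = 0 := by
  rw [← b.tsum_inner_mul_inner]
  refine (tsum_congr fun k => ?_).trans tsum_zero
  by_cases hk : k ∈ Set.range f
  · rw [b.inner_isometryOfEmbedding_eq_zero (Set.disjoint_left.1 hfg hk), mul_zero]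
  · rw [← inner_conj_symm, b.inner_isometryOfEmbedding_eq_zero hk, map_zero, zero_mul]

theorem exists_isometries_with_orthogonal_ranges [Infinite ι] (b : HilbertBasis ι 𝕜 E) :
    ∃ V W : E →L[𝕜] E, adjoint V * V = 1 ∧ adjoint W * W = 1 ∧ adjoint V * W = 0 ∧
      adjoint W * V = 0 := by
  obtain ⟨e⟩ : Nonempty (ι ⊕ ι ≃ ι) := Cardinal.eq.1 <| by
    simp [Cardinal.add_eq_self (Cardinal.aleph0_le_mk ι)]
  let f : ι ↪ ι := Function.Embedding.inl.trans e.toEmbedding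
  let g : ι ↪ ι := Function.Embedding.inr.trans e.toEmbedding
  have hfg : Disjoint (Set.range f) (Set.range g) :=
    Set.disjoint_range_iff.2 fun i j h => by simp [f, g] at h
  refine ⟨(b.isometryOfEmbedding f).toContinuousLinearMap,
    (b.isometryOfEmbedding g).toContinuousLinearMap, ?_, ?_, ?_, ?_⟩ <;>
    refine adjoint_mul_eq_of_inner fun x y => ?_
  · simp
  · simp
  · simp [b.inner_isometryOfEmbedding_isometryOfEmbedding hfg]
  · simp [b.inner_isometryOfEmbedding_isometryOfEmbedding hfg.symm]

end HilbertBasis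

end Isometry

namespace IsTC

variable {E ι : Type*} [NormedAddCommGroup E] [InnerProductSpace ℂ E] {b : HilbertBasis ι ℂ E}

theorem of_isHS_mul {A B : E →L[ℂ] E} (hA : IsHS b A) (hB : IsHS b B) : IsTC b (A * B) :=
  ⟨A, B, hA, hB, rfl⟩

theorem mul_left (C : E →L[ℂ] E) {T : E →L[ℂ] E} (hT : IsTC b T) : IsTC b (C * T) := by
  obtain ⟨A, B, hA, hB, rfl⟩ := hT
  exact ⟨C * A, B, hA.mul_left C, hB, (mul_assoc C A B).symm⟩

variable [CompleteSpace E]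

theorem isHS {T : E →L[ℂ] E} (hT : IsTC b T) : IsHS b T := by
  obtain ⟨A, B, hA, -, rfl⟩ := hT
  exact hA.mul_right B

theorem mul_right {T : E →L[ℂ] E} (hT : IsTC b T) (C : E →L[ℂ] E) : IsTC b (T * C) := by
  obtain ⟨A, B, hA, hB, rfl⟩ := hT
  exact ⟨A, B * C, hA, hB.mul_right C, mul_assoc A B C⟩

theorem add {S T : E →L[ℂ] E} (hS : IsTC b S) (hT : IsTC b T) : IsTC b (S + T) := by
  obtain ⟨A₁, B₁, hA₁, hB₁, rfl⟩ := hS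
  obtain ⟨A₂, B₂, hA₂, hB₂, rfl⟩ := hT
  cases finite_or_infinite ι
  · exact ⟨A₁ * B₁ + A₂ * B₂, 1, .of_finite _, .of_finite _, (mul_one _).symm⟩
  obtain ⟨V, W, hVV, hWW, hVW, hWV⟩ := b.exists_isometries_with_orthogonal_ranges
  refine ⟨A₁ * adjoint V + A₂ * adjoint W, V * B₁ + W * B₂,
    (hA₁.mul_right _).add (hA₂.mul_right _), (hB₁.mul_left _).add (hB₂.mul_left _), ?_⟩
  calc A₁ * B₁ + A₂ * B₂
      = A₁ * (adjoint V * V) * B₁ + A₁ * (adjoint V * W) * B₂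
        + A₂ * (adjoint W * V) * B₁ + A₂ * (adjoint W * W) * B₂ := by
        rw [hVV, hWW, hVW, hWV]; noncomm_ring
    _ = _ := by noncomm_ring

end IsTC

section Restricted

variable {E ι : Type*} [NormedAddCommGroup E] [InnerProductSpace ℂ E]
  {b : HilbertBasis ι ℂ E} {P μ ν : E →L[ℂ] E}

theorem InGlres.isHS_mul_mul_compl (hP : IsIdempotentElem P) (hν : InGlres b P ν) :
    IsHS b (P * ν * (1 - P)) := by
  convert (hν.mul_left P).neg using 1
  calc P * ν * (1 - P) = P * ν - P * ν * P := by noncomm_ring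
    _ = -(P * (ν * P - P * ν)) := by rw [mul_sub, ← mul_assoc P P, hP.eq]; noncomm_ring

variable [CompleteSpace E]

theorem InGlres.isHS_compl_mul_mul (hP : IsIdempotentElem P) (hν : InGlres b P ν) :
    IsHS b ((1 - P) * ν * P) := by
  convert hν.mul_right P using 1
  calc (1 - P) * ν * P = ν * P - P * ν * P := by noncomm_ring
    _ = (ν * P - P * ν) * P := by rw [sub_mul, mul_assoc ν, hP.eq]

theorem InL1res.mul_right (hP : IsIdempotentElem P) (hμ : InL1res b P μ) (hν : InGlres b P ν) :
    InL1res b P (μ * ν) := by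
  obtain ⟨hμpp, hμmm, hμpm, hμmp⟩ := hμ
  have hνpm := hν.isHS_mul_mul_compl hP
  have hνmp := hν.isHS_compl_mul_mul hP
  refine ⟨?_, ?_, ?_, ?_⟩ <;> rw [hP.mul_mul_eq_add]
  · exact (hμpp.mul_right _).add (.of_isHS_mul hμpm hνmp)
  · exact (IsTC.of_isHS_mul hμmp hνpm).add (hμmm.mul_right _)
  · exact (hμpp.isHS.mul_right _).add (hμpm.mul_right _)
  · exact (hμmp.mul_right _).add (hμmm.isHS.mul_right _)

theorem InL1res.mul_left (hP : IsIdempotentElem P) (hμ : InL1res b P μ) (hν : InGlres b P ν) :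
    InL1res b P (ν * μ) := by
  obtain ⟨hμpp, hμmm, hμpm, hμmp⟩ := hμ
  have hνpm := hν.isHS_mul_mul_compl hP
  have hνmp := hν.isHS_compl_mul_mul hP
  refine ⟨?_, ?_, ?_, ?_⟩ <;> rw [hP.mul_mul_eq_add]
  · exact (hμpp.mul_left _).add (.of_isHS_mul hνpm hμmp)
  · exact (IsTC.of_isHS_mul hνmp hμpm).add (hμmm.mul_left _)
  · exact (hμpm.mul_left _).add (hνpm.mul_right _)
  · exact (hνmp.mul_right _).add (hμmp.mul_left _)

end Restricted

theorem stmt0_general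
    (P : H →L[ℂ] H) (hPidem : IsIdempotentElem P)
    {ι : Type*} (b : HilbertBasis ι ℂ H) (μ ν : H →L[ℂ] H)
    (hμ : InL1res b P μ) (hν : InGlres b P ν) :
    InL1res b P (μ * ν) ∧ InL1res b P (ν * μ) :=
  ⟨hμ.mul_right hPidem hν, hμ.mul_left hPidem hν⟩

/-- `L¹_res` is a two-sided ideal of `gl_res`: if `μ ∈ L¹_res` and
`ν ∈ gl_res` then `μν, νμ ∈ L¹_res`. -/
theorem stmt0 [TopologicalSpace.SeparableSpace H]
    (P : H →L[ℂ] H) (hPsa : IsSelfAdjoint P) (hPidem : IsIdempotentElem P)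
    {ι : Type*} (b : HilbertBasis ι ℂ H) (μ ν : H →L[ℂ] H)
    (hμ : InL1res b P μ) (hν : InGlres b P ν) :
    InL1res b P (μ * ν) ∧ InL1res b P (ν * μ) :=
  stmt0_general P hPidem b μ ν hμ hν
end
end

section
/- Let μ be a bounded operator on H. Define rational numbers c_n^l(k) for l ≥ 0, n ≥ 1 and integers k by c₁^l(k) = 1 and c_{n+1}^l(k) = Σ_{i=l+1}^{k−1} c_n^l(i) (empty sum = 0). Then: (i) the shift compatibility c_n^{l+1}(k) = c_n^l(k−1) holds for all n ≥ 1, l ≥ 0 and all k; (ii) for all integers 0 ≤ l < k one has W_{k−l}ᵏ(μ) = Σ_{n=1}^{l+1} c_n^l(k)·H_n^l(μ); and (iii) W₀ᵏ(μ) = H₀ᵏ(μ) = μᵏ. -/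
noncomputable section

variable {H : Type*} [NormedAddCommGroup H] [InnerProductSpace ℂ H] [CompleteSpace H]

/-- The operators `W_n^k(μ)`: the coefficient of `λ^n` in `(μ + λP)^k`, defined by
`W₀⁰ = 1` and the recurrence `W_n^{k+1} = μ W_n^k + P W_{n-1}^k` (with `W_{-1}^k = 0`
and `W_n^k = 0` for `n > k`).  Here `W P μ k n` is `W_n^k(μ)`. -/
def W (P μ : H →L[ℂ] H) : ℕ → ℕ → H →L[ℂ] H
  | 0, 0 => 1
  | 0, _ + 1 => 0
  | k + 1, 0 => μ * W P μ k 0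
  | k + 1, n + 1 => μ * W P μ k (n + 1) + P * W P μ k n

/-- The word `P^{i₀} μ P^{i₁} μ ⋯ μ P^{i_l}` determined by `i ∈ {0,1}^{l+1}`. -/
def word (P μ : H →L[ℂ] H) {l : ℕ} (i : Fin (l + 1) → Bool) : H →L[ℂ] H :=
  (if i 0 then P else 1) * (List.ofFn fun j : Fin l => μ * (if i j.succ then P else 1)).prod

/-- The homogeneous polynomial
`H_n^l(μ) = Σ_{i₀+⋯+i_l = n, i_j ∈ {0,1}} P^{i₀} μ P^{i₁} μ ⋯ μ P^{i_l}`. -/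
def Hpoly (P μ : H →L[ℂ] H) (l n : ℕ) : H →L[ℂ] H :=
  ∑ i ∈ Finset.univ.filter (fun i : Fin (l + 1) → Bool => (∑ j, if i j then 1 else 0) = n),
    word P μ i

/-- The coefficients `c_{n+1}^l(k)`: `ccoef l n k` is `c_{n+1}^l(k)`, defined by
`c₁^l(k) = 1` and `c_{n+1}^l(k) = Σ_{i=l+1}^{k-1} c_n^l(i)` (empty sum = 0). -/
def ccoef (l : ℕ) : ℕ → ℤ → ℚ
  | 0, _ => 1
  | n + 1, k => ∑ i ∈ Finset.Ico ((l : ℤ) + 1) k, ccoef l n i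

set_option linter.unusedSectionVars false

lemma W_zero (P μ : H →L[ℂ] H) (k : ℕ) : W P μ k 0 = μ ^ k := by
  induction k with
  | zero => rfl
  | succ k ih => show μ * W P μ k 0 = _; rw [ih, pow_succ']

lemma W_gt (P μ : H →L[ℂ] H) : ∀ k n : ℕ, k < n → W P μ k n = 0 := by
  intro k
  induction k with
  | zero => intro n hn; obtain ⟨m, rfl⟩ : ∃ m, n = m + 1 := ⟨n - 1, by omega⟩; rfl
  | succ k ih =>
    intro n hn
    obtain ⟨m, rfl⟩ : ∃ m, n = m + 1 := ⟨n - 1, by omega⟩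
    show μ * W P μ k (m+1) + P * W P μ k m = 0
    rw [ih _ (by omega), ih _ (by omega), mul_zero, mul_zero, add_zero]

lemma W_diag (P μ : H →L[ℂ] H) (hPidem : IsIdempotentElem P) (k : ℕ) :
    W P μ (k+1) (k+1) = P := by
  induction k with
  | zero => show μ * W P μ 0 1 + P * W P μ 0 0 = P; simp [W]
  | succ k ih =>
    show μ * W P μ (k+1) (k+2) + P * W P μ (k+1) (k+1) = P
    rw [W_gt P μ _ _ (by omega), ih, mul_zero, zero_add, hPidem]

lemma ccoef_shift (l n : ℕ) (k : ℤ) : ccoef (l+1) n k = ccoef l n (k-1) := by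
  induction n generalizing k with
  | zero => rfl
  | succ n ih =>
    show (∑ i ∈ Finset.Ico (((l+1:ℕ) : ℤ) + 1) k, ccoef (l+1) n i)
      = ∑ i ∈ Finset.Ico ((l : ℤ) + 1) (k-1), ccoef l n i
    have hIco : Finset.Ico (((l+1:ℕ) : ℤ) + 1) k
        = (Finset.Ico ((l : ℤ) + 1) (k-1)).map (addRightEmbedding 1) := by
      rw [Finset.map_add_right_Ico]
      congr 1 <;> push_cast <;> ring
    rw [hIco, Finset.sum_map]
    refine Finset.sum_congr rfl fun i _ => ?_
    rw [ih]
    simp [addRightEmbedding]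

lemma ccoef_zero_of_le (l n : ℕ) (k : ℤ) (h : k ≤ (l:ℤ) + 1) : ccoef l (n+1) k = 0 := by
  show (∑ i ∈ Finset.Ico ((l : ℤ) + 1) k, ccoef l n i) = 0
  rw [Finset.Ico_eq_empty (by omega), Finset.sum_empty]

lemma ccoef_split (l n : ℕ) (k : ℤ) (h : (l:ℤ) + 1 ≤ k - 1) :
    ccoef l (n+1) k = ccoef l (n+1) (k-1) + ccoef l n (k-1) := by
  have hset : Finset.Ico ((l:ℤ) + 1) k = Finset.Ico ((l:ℤ) + 1) (k-1) ∪ {k-1} := by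
    ext i
    simp only [Finset.mem_Ico, Finset.mem_union, Finset.mem_singleton]
    omega
  have hdisj : Disjoint (Finset.Ico ((l:ℤ) + 1) (k-1)) ({k-1} : Finset ℤ) := by
    simp only [Finset.disjoint_singleton_right, Finset.mem_Ico]
    omega
  show (∑ i ∈ Finset.Ico ((l : ℤ) + 1) k, ccoef l n i) = _
  rw [hset, Finset.sum_union hdisj, Finset.sum_singleton]
  rfl

lemma Hpoly_gt (P μ : H →L[ℂ] H) (l n : ℕ) (h : l + 1 < n) : Hpoly P μ l n = 0 := by
  unfold Hpoly
  convert Finset.sum_empty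
  ext i
  simp only [Finset.mem_filter, Finset.mem_univ, true_and, Finset.notMem_empty, iff_false]
  intro hs
  have hle : (∑ j, if i j then 1 else 0) ≤ ∑ _j : Fin (l+1), 1 :=
    Finset.sum_le_sum (fun j _ => by split <;> omega)
  simp only [Finset.sum_const, Finset.card_univ, Fintype.card_fin, smul_eq_mul, mul_one] at hle
  omega

lemma Hpoly_zero (P μ : H →L[ℂ] H) (l : ℕ) : Hpoly P μ l 0 = μ ^ l := by
  unfold Hpoly
  have hf : Finset.univ.filter (fun i : Fin (l+1) → Bool => (∑ j, if i j then 1 else 0) = 0)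
      = {fun _ => false} := by
    ext i
    simp only [Finset.mem_filter, Finset.mem_univ, true_and, Finset.mem_singleton,
      Finset.sum_eq_zero_iff, Finset.mem_univ, forall_true_left]
    constructor
    · intro h; funext j; have := h j; by_cases hb : i j <;> simp_all
    · intro h; subst h; simp
  rw [hf, Finset.sum_singleton]
  unfold word
  simp [List.ofFn_const]

lemma word_cons (P μ : H →L[ℂ] H) (l : ℕ) (b : Bool) (j : Fin (l+1) → Bool) :
    word P μ (Fin.cons b j) = (if b then P else 1) * (μ * word P μ j) := by
  unfold word
  rw [Fin.cons_zero]
  congr 1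
  simp only [Fin.cons_succ]
  rw [List.ofFn_succ, List.prod_cons, mul_assoc]

lemma Hpoly_rec (P μ : H →L[ℂ] H) (l n : ℕ) :
    Hpoly P μ (l+1) (n+1) = μ * Hpoly P μ l (n+1) + P * (μ * Hpoly P μ l n) := by
  have key : ∀ (b : Bool) (j : Fin (l+1) → Bool),
      (∑ t, if (Fin.cons b j : Fin (l+1+1) → Bool) t then (1:ℕ) else 0)
        = (if b then 1 else 0) + ∑ t, if j t then (1:ℕ) else 0 := by
    intro b j
    rw [Fin.sum_univ_succ, Fin.cons_zero]
    simp [Fin.cons_succ]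
  have expand : ∀ m : ℕ, Hpoly P μ l m
      = ∑ j : Fin (l+1) → Bool, if (∑ t, if j t then (1:ℕ) else 0) = m then word P μ j else 0 := by
    intro m; unfold Hpoly; rw [Finset.sum_filter]
  have lhs_eq : Hpoly P μ (l+1) (n+1)
      = (∑ j : Fin (l+1) → Bool,
          if (∑ t, if (Fin.cons true j : Fin (l+1+1) → Bool) t then (1:ℕ) else 0) = n + 1
            then word P μ (Fin.cons true j) else 0)
        + ∑ j : Fin (l+1) → Bool,
          if (∑ t, if (Fin.cons false j : Fin (l+1+1) → Bool) t then (1:ℕ) else 0) = n + 1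
            then word P μ (Fin.cons false j) else 0 := by
    unfold Hpoly
    rw [Finset.sum_filter,
      ← Equiv.sum_comp (Fin.consEquiv (fun _ : Fin (l+1+1) => Bool)),
      Fintype.sum_prod_type, Fintype.sum_bool]
    rfl
  have htrue : (∑ j : Fin (l+1) → Bool,
      if (∑ t, if (Fin.cons true j : Fin (l+1+1) → Bool) t then (1:ℕ) else 0) = n + 1
        then word P μ (Fin.cons true j) else 0)
      = P * (μ * Hpoly P μ l n) := by
    rw [expand, Finset.mul_sum, Finset.mul_sum]
    refine Finset.sum_congr rfl fun j _ => ?_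
    rw [key, word_cons]
    have hc : ((if (true:Bool) then (1:ℕ) else 0) + (∑ t, if j t then (1:ℕ) else 0) = n + 1)
        ↔ ((∑ t, if j t then (1:ℕ) else 0) = n) := by
      simp only [if_true]; omega
    rw [if_congr hc rfl rfl]
    split <;> simp
  have hfalse : (∑ j : Fin (l+1) → Bool,
      if (∑ t, if (Fin.cons false j : Fin (l+1+1) → Bool) t then (1:ℕ) else 0) = n + 1
        then word P μ (Fin.cons false j) else 0)
      = μ * Hpoly P μ l (n+1) := by
    rw [expand, Finset.mul_sum]
    refine Finset.sum_congr rfl fun j _ => ?_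
    rw [key, word_cons]
    have hc : ((if (false:Bool) then (1:ℕ) else 0) + (∑ t, if j t then (1:ℕ) else 0) = n + 1)
        ↔ ((∑ t, if j t then (1:ℕ) else 0) = n + 1) := by
      simp only [Bool.false_eq_true, if_false]; omega
    rw [if_congr hc rfl rfl]
    split <;> simp
  rw [lhs_eq, htrue, hfalse, add_comm]

lemma Hpoly_zero_one (P μ : H →L[ℂ] H) : Hpoly P μ 0 1 = P := by
  unfold Hpoly
  have hf : Finset.univ.filter (fun i : Fin 1 → Bool => (∑ j, if i j then 1 else 0) = 1)
      = {fun _ => true} := by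
    ext i
    simp only [Finset.mem_filter, Finset.mem_univ, true_and, Finset.mem_singleton,
      Fin.sum_univ_one]
    constructor
    · intro h; funext j
      have : j = 0 := Subsingleton.elim _ _
      subst this
      by_cases hb : i 0 <;> simp_all
    · intro h; subst h; simp
  rw [hf, Finset.sum_singleton]
  unfold word
  simp

lemma step (P μ : H →L[ℂ] H) (l d : ℕ)
    (hA : W P μ (l+d+1) (d+1)
      = ∑ n ∈ Finset.range (l+1), ((ccoef l n ((l+d+1 : ℕ) : ℤ) : ℚ) : ℂ) • Hpoly P μ l (n+1))
    (hB : P * W P μ (l+d+1) d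
      = P * ∑ n ∈ Finset.range (l+2),
          ((ccoef l n ((l+d+1 : ℕ) : ℤ) : ℚ) : ℂ) • (μ * Hpoly P μ l n)) :
    W P μ (l+1+d+1) (d+1)
      = ∑ n ∈ Finset.range (l+2),
          ((ccoef (l+1) n ((l+1+d+1 : ℕ) : ℤ) : ℚ) : ℂ) • Hpoly P μ (l+1) (n+1) := by
  have hidx : l+1+d+1 = (l+d+1)+1 := by omega
  rw [hidx]
  have hLHS : W P μ ((l+d+1)+1) (d+1)
      = μ * W P μ (l+d+1) (d+1) + P * W P μ (l+d+1) d := rfl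
  rw [hLHS]
  have hcast : (((l+d+1)+1 : ℕ) : ℤ) - 1 = ((l+d+1 : ℕ) : ℤ) := by push_cast; ring
  have hRHS : ∀ n, ((ccoef (l+1) n (((l+d+1)+1 : ℕ) : ℤ) : ℚ) : ℂ) • Hpoly P μ (l+1) (n+1)
      = ((ccoef l n ((l+d+1 : ℕ) : ℤ) : ℚ) : ℂ) • (μ * Hpoly P μ l (n+1))
        + ((ccoef l n ((l+d+1 : ℕ) : ℤ) : ℚ) : ℂ) • (P * (μ * Hpoly P μ l n)) := by
    intro n
    rw [ccoef_shift, hcast, Hpoly_rec, smul_add]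
  rw [Finset.sum_congr rfl (fun n _ => hRHS n), Finset.sum_add_distrib]
  congr 1
  · -- first sum = μ * W
    rw [Finset.sum_range_succ, Hpoly_gt P μ l (l+2) (by omega), mul_zero, smul_zero, add_zero]
    rw [hA, Finset.mul_sum]
    exact Finset.sum_congr rfl fun n _ => mul_smul_comm _ _ _
  · -- second sum = P * W
    rw [hB, Finset.mul_sum]
    exact Finset.sum_congr rfl fun n _ => mul_smul_comm _ _ _

lemma claim (P μ : H →L[ℂ] H) (hPidem : IsIdempotentElem P) :
    ∀ l d : ℕ, W P μ (l+d+1) (d+1)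
      = ∑ n ∈ Finset.range (l+1), ((ccoef l n ((l+d+1 : ℕ) : ℤ) : ℚ) : ℂ) • Hpoly P μ l (n+1) := by
  intro l
  induction l with
  | zero =>
    intro d
    simp only [Nat.zero_add]
    rw [Finset.sum_range_one, W_diag P μ hPidem d, Hpoly_zero_one]
    rw [show ccoef 0 0 ((d+1 : ℕ) : ℤ) = 1 from rfl]
    simp
  | succ l ihl =>
    intro d
    induction d with
    | zero =>
      refine step P μ l 0 (ihl 0) ?_
      rw [W_zero]
      congr 1
      rw [Finset.sum_range_succ']
      have hz : ∀ n ∈ Finset.range (l+1),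
          ((ccoef l (n+1) ((l+0+1 : ℕ) : ℤ) : ℚ) : ℂ) • (μ * Hpoly P μ l (n+1)) = 0 := by
        intro n _
        rw [ccoef_zero_of_le l n _ (by push_cast; omega)]
        simp
      rw [Finset.sum_congr rfl hz, Finset.sum_const_zero, zero_add,
        show ccoef l 0 ((l+0+1 : ℕ) : ℤ) = 1 from rfl, Hpoly_zero]
      rw [show ((1:ℚ):ℂ) = 1 from by norm_num, one_smul, ← pow_succ']
    | succ e ihe =>
      refine step P μ l (e+1) (ihl (e+1)) ?_
      have hidx : l+(e+1)+1 = (l+1)+e+1 := by omega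
      rw [hidx, ihe]
      have hP : ∀ m, P * Hpoly P μ (l+1) (m+1)
          = P * (μ * Hpoly P μ l (m+1)) + P * (μ * Hpoly P μ l m) := by
        intro m
        rw [Hpoly_rec, mul_add, ← mul_assoc P P (μ * Hpoly P μ l m), hPidem]
      have hcoef : ∀ m, ((ccoef l (m+1) ((l+1+e+1 : ℕ) : ℤ) : ℚ) : ℂ)
          = ((ccoef (l+1) m ((l+1+e+1 : ℕ) : ℤ) : ℚ) : ℂ)
            + ((ccoef (l+1) (m+1) ((l+1+e+1 : ℕ) : ℤ) : ℚ) : ℂ) := by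
        intro m
        rw [ccoef_shift l m, ccoef_shift l (m+1),
          ccoef_split l m ((l+1+e+1 : ℕ) : ℤ) (by push_cast; omega)]
        push_cast; ring
      rw [Finset.mul_sum, Finset.mul_sum]
      simp only [mul_smul_comm]
      have lhs2 : (∑ m ∈ Finset.range (l+1+1),
            ((ccoef (l+1) m ((l+1+e+1 : ℕ) : ℤ) : ℚ) : ℂ) • (P * Hpoly P μ (l+1) (m+1)))
          = (∑ m ∈ Finset.range (l+1), ((ccoef (l+1) m ((l+1+e+1 : ℕ) : ℤ) : ℚ) : ℂ)
                • (P * (μ * Hpoly P μ l (m+1))))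
            + ((∑ m ∈ Finset.range (l+1), ((ccoef (l+1) (m+1) ((l+1+e+1 : ℕ) : ℤ) : ℚ) : ℂ)
                • (P * (μ * Hpoly P μ l (m+1))))
              + ((ccoef (l+1) 0 ((l+1+e+1 : ℕ) : ℤ) : ℚ) : ℂ) • (P * (μ * Hpoly P μ l 0))) := by
        have h1 : ∀ m ∈ Finset.range (l+1+1),
            ((ccoef (l+1) m ((l+1+e+1 : ℕ) : ℤ) : ℚ) : ℂ) • (P * Hpoly P μ (l+1) (m+1))
            = ((ccoef (l+1) m ((l+1+e+1 : ℕ) : ℤ) : ℚ) : ℂ) • (P * (μ * Hpoly P μ l (m+1)))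
              + ((ccoef (l+1) m ((l+1+e+1 : ℕ) : ℤ) : ℚ) : ℂ) • (P * (μ * Hpoly P μ l m)) := by
          intro m _
          rw [hP m, smul_add]
        rw [Finset.sum_congr rfl h1, Finset.sum_add_distrib]
        congr 1
        · rw [Finset.sum_range_succ, Hpoly_gt P μ l (l+1+1) (by omega), mul_zero, mul_zero,
            smul_zero, add_zero]
        · rw [Finset.sum_range_succ']
      have rhs2 : (∑ x ∈ Finset.range (l+2),
            ((ccoef l x ((l+1+e+1 : ℕ) : ℤ) : ℚ) : ℂ) • (P * (μ * Hpoly P μ l x)))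
          = (∑ m ∈ Finset.range (l+1), ((ccoef l (m+1) ((l+1+e+1 : ℕ) : ℤ) : ℚ) : ℂ)
              • (P * (μ * Hpoly P μ l (m+1))))
            + ((ccoef l 0 ((l+1+e+1 : ℕ) : ℤ) : ℚ) : ℂ) • (P * (μ * Hpoly P μ l 0)) :=
        Finset.sum_range_succ' _ (l+1)
      rw [lhs2, rhs2, ← add_assoc]
      congr 1
      rw [← Finset.sum_add_distrib]
      refine Finset.sum_congr rfl fun m _ => ?_
      rw [← add_smul, ← hcoef m]

/-- (i) shift compatibility `c_n^{l+1}(k) = c_n^l(k-1)`;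
(ii) the expansion `W_{k-l}^k(μ) = Σ_{n=1}^{l+1} c_n^l(k) H_n^l(μ)` for `0 ≤ l < k`;
(iii) `W₀^k(μ) = H₀^k(μ) = μ^k`.  (Recall `ccoef l n k` is `c_{n+1}^l(k)`.) -/
theorem stmt12 (P : H →L[ℂ] H) (hPsa : IsSelfAdjoint P) (hPidem : IsIdempotentElem P)
    (μ : H →L[ℂ] H) :
    (∀ (l n : ℕ) (k : ℤ), ccoef (l + 1) n k = ccoef l n (k - 1)) ∧
    (∀ k l : ℕ, l < k →
      W P μ k (k - l) =
        ∑ n ∈ Finset.range (l + 1), ((ccoef l n (k : ℤ) : ℚ) : ℂ) • Hpoly P μ l (n + 1)) ∧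
    (∀ k : ℕ, W P μ k 0 = Hpoly P μ k 0 ∧ Hpoly P μ k 0 = μ ^ k) := by
  
  refine ⟨fun l n k => ccoef_shift l n k, ?_, fun k => ⟨by rw [W_zero, Hpoly_zero], Hpoly_zero P μ k⟩⟩
  intro k l hlk
  obtain ⟨d, rfl⟩ : ∃ d, k = l + d + 1 := ⟨k - l - 1, by omega⟩
  have h1 : l + d + 1 - l = d + 1 := by omega
  rw [h1]
  exact claim P μ hPidem l d
end
end

section
/- Define rational numbers c_n^l(k) for l ≥ 0, n ≥ 1 and integers k by c₁^l(k) = 1 and c_{n+1}^l(k) = Σ_{i=l+1}^{k−1} c_n^l(i) (empty sum = 0). Then for every l ≥ 0, the family of vectors {(c₁^l(k), c₂^l(k), …, c_{l+1}^l(k)) : k ≥ l+1} spans the whole (l+1)-dimensional vector space ℚ^{l+1}. (Consequently each homogeneous polynomial H_n^l, 1 ≤ n ≤ l+1, is a finite linear combination of the operators W_{k−l}ᵏ, k ≥ l+1, with coefficients independent of μ.) -/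
/-!
Shifting the argument by `l + 1`, the recurrence for `c_n^l` becomes Pascal's rule, so
`c_{n+1}^l(l + 1 + m) = (m choose n)`. The vectors for `k = l + 1, …, 2l + 1` are therefore the
rows of the Pascal matrix `((j choose n))_{j,n ≤ l}`, which is lower unitriangular and hence
invertible.
-/

noncomputable section

lemma ccoef_succ_add_one {l n : ℕ} {k : ℤ} (hk : (l : ℤ) + 1 ≤ k) :
    ccoef l (n + 1) (k + 1) = ccoef l n k + ccoef l (n + 1) k := by
  rw [ccoef, ccoef, ← Finset.insert_Ico_right_eq_Ico_add_one hk,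
    Finset.sum_insert Finset.right_notMem_Ico]

lemma ccoef_add_one_add (l n m : ℕ) : ccoef l n ((l : ℤ) + 1 + m) = (m.choose n : ℚ) := by
  induction m generalizing n with
  | zero => cases n <;> simp [ccoef]
  | succ m ih =>
    cases n with
    | zero => simp [ccoef]
    | succ n =>
      push_cast
      rw [← add_assoc, ccoef_succ_add_one (by omega), ih, ih, Nat.choose_succ_succ, Nat.cast_add]

def pascalMatrix (K : Type*) [NatCast K] (r : ℕ) : Matrix (Fin r) (Fin r) K :=
  Matrix.of fun j n => ((j : ℕ).choose n : K)

theorem det_pascalMatrix (K : Type*) [CommRing K] (r : ℕ) : (pascalMatrix K r).det = 1 := by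
  rw [Matrix.det_of_isLowerTriangular]
  · simp [pascalMatrix]
  · intro j n hjn
    simp [pascalMatrix, Nat.choose_eq_zero_of_lt (show (j : ℕ) < n from hjn)]

theorem span_range_pascalMatrix_eq_top (K : Type*) [Field K] (r : ℕ) :
    Submodule.span K (Set.range (pascalMatrix K r)) = ⊤ := by
  have hdet : (pascalMatrix K r).det ≠ 0 := by simp [det_pascalMatrix]
  exact (Matrix.linearIndependent_rows_of_det_ne_zero hdet).span_eq_top_of_card_eq_finrank'
    (by simp)

/-- For every `l`, the vectors `(c₁^l(k), …, c_{l+1}^l(k))`,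
`k ≥ l + 1`, span all of `ℚ^{l+1}`. -/
theorem stmt14 :
    ∀ l : ℕ, Submodule.span ℚ
        {v : Fin (l + 1) → ℚ |
          ∃ k : ℕ, l + 1 ≤ k ∧ v = fun n : Fin (l + 1) => ccoef l (n : ℕ) (k : ℤ)} =
      ⊤ := by
  intro l
  rw [eq_top_iff, ← span_range_pascalMatrix_eq_top ℚ (l + 1)]
  refine Submodule.span_mono ?_
  rintro _ ⟨j, rfl⟩
  refine ⟨l + 1 + j, by omega, funext fun n => ?_⟩
  push_cast
  rw [ccoef_add_one_add, pascalMatrix, Matrix.of_apply]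
end
end

section
/- Let μ be a bounded operator on H, γ ∈ ℂ, and let k ≥ 1, 0 ≤ n ≤ k be integers. Then [μ − γP₊, W_nᵏ(μ)] = [μ, W_nᵏ(μ) + γW_{n+1}ᵏ(μ)] = −[P₊, γW_nᵏ(μ) + W_{n−1}ᵏ(μ)], with the conventions W_{−1}ᵏ := 0 and W_{k+1}ᵏ := 0. (These identities show that the three forms (h-W), (h-mu), (h-P+) of the hierarchy of Hamilton equations coincide.) -/
noncomputable section

variable {H : Type*} [NormedAddCommGroup H] [InnerProductSpace ℂ H] [CompleteSpace H]

/-- `W_0^k = μ^k` commutes with `μ`. -/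
lemma W_zero_comm (P μ : H →L[ℂ] H) (k : ℕ) :
    μ * W P μ k 0 - W P μ k 0 * μ = 0 := by
  induction k with
  | zero => simp [W]
  | succ k ih =>
    have h : μ * W P μ k 0 = W P μ k 0 * μ := by
      rw [← sub_eq_zero]; exact ih
    show μ * (μ * W P μ k 0) - μ * W P μ k 0 * μ = 0
    rw [mul_assoc, h, sub_self]

/-- Key identity: `[μ, W_{n+1}^k] + [P, W_n^k] = 0`. -/
lemma W_key (P μ : H →L[ℂ] H) (k : ℕ) : ∀ n : ℕ,
    μ * W P μ k (n + 1) - W P μ k (n + 1) * μ +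
      (P * W P μ k n - W P μ k n * P) = 0 := by
  induction k with
  | zero =>
    intro n
    match n with
    | 0 => simp [W]
    | m + 1 => simp [W]
  | succ k ih =>
    intro n
    match n with
    | 0 =>
      have e1 := ih 0
      have e0 : μ * W P μ k 0 = W P μ k 0 * μ := by
        rw [← sub_eq_zero]; exact W_zero_comm P μ k
      show μ * (μ * W P μ k 1 + P * W P μ k 0) -
          (μ * W P μ k 1 + P * W P μ k 0) * μ +
          (P * (μ * W P μ k 0) - μ * W P μ k 0 * P) = 0
      calc μ * (μ * W P μ k 1 + P * W P μ k 0) -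
          (μ * W P μ k 1 + P * W P μ k 0) * μ +
          (P * (μ * W P μ k 0) - μ * W P μ k 0 * P)
          = μ * (μ * W P μ k 1 - W P μ k 1 * μ + (P * W P μ k 0 - W P μ k 0 * P))
            + P * (μ * W P μ k 0) - P * (W P μ k 0 * μ) := by noncomm_ring
        _ = 0 := by rw [e1, e0]; simp
    | m + 1 =>
      have e1 := ih (m + 1)
      have e2 := ih m
      show μ * (μ * W P μ k (m + 2) + P * W P μ k (m + 1)) -
          (μ * W P μ k (m + 2) + P * W P μ k (m + 1)) * μ +
          (P * (μ * W P μ k (m + 1) + P * W P μ k m) -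
            (μ * W P μ k (m + 1) + P * W P μ k m) * P) = 0
      calc μ * (μ * W P μ k (m + 2) + P * W P μ k (m + 1)) -
          (μ * W P μ k (m + 2) + P * W P μ k (m + 1)) * μ +
          (P * (μ * W P μ k (m + 1) + P * W P μ k m) -
            (μ * W P μ k (m + 1) + P * W P μ k m) * P)
          = μ * (μ * W P μ k (m + 2) - W P μ k (m + 2) * μ +
              (P * W P μ k (m + 1) - W P μ k (m + 1) * P))
            + P * (μ * W P μ k (m + 1) - W P μ k (m + 1) * μ +
              (P * W P μ k m - W P μ k m * P)) := by noncomm_ring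
        _ = 0 := by rw [e1, e2]; simp

/-- The identities
`[μ - γP, W_n^k] = [μ, W_n^k + γW_{n+1}^k] = -[P, γW_n^k + W_{n-1}^k]` for
`0 ≤ n ≤ k`, `k ≥ 1` (conventions `W_{-1}^k = 0`, `W_{k+1}^k = 0`); the case `n = 0`
is stated separately to implement the convention `W_{-1}^k = 0`. -/
theorem stmt15 (P : H →L[ℂ] H) (hPsa : IsSelfAdjoint P) (hPidem : IsIdempotentElem P)
    (μ : H →L[ℂ] H) (γ : ℂ) :
    (∀ k : ℕ, 1 ≤ k →
      ((μ - γ • P) * W P μ k 0 - W P μ k 0 * (μ - γ • P) =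
          μ * (W P μ k 0 + γ • W P μ k 1) - (W P μ k 0 + γ • W P μ k 1) * μ ∧
        μ * (W P μ k 0 + γ • W P μ k 1) - (W P μ k 0 + γ • W P μ k 1) * μ =
          -(P * (γ • W P μ k 0) - (γ • W P μ k 0) * P))) ∧
    (∀ k n : ℕ, 1 ≤ k → n + 1 ≤ k →
      ((μ - γ • P) * W P μ k (n + 1) - W P μ k (n + 1) * (μ - γ • P) =
          μ * (W P μ k (n + 1) + γ • W P μ k (n + 2)) -
            (W P μ k (n + 1) + γ • W P μ k (n + 2)) * μ ∧
        μ * (W P μ k (n + 1) + γ • W P μ k (n + 2)) -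
            (W P μ k (n + 1) + γ • W P μ k (n + 2)) * μ =
          -(P * (γ • W P μ k (n + 1) + W P μ k n) -
            (γ • W P μ k (n + 1) + W P μ k n) * P))) := by
  constructor
  · intro k _
    have h0 := W_zero_comm P μ k
    have h1 := W_key P μ k 0
    constructor
    · rw [← sub_eq_zero]
      calc (μ - γ • P) * W P μ k 0 - W P μ k 0 * (μ - γ • P) -
          (μ * (W P μ k 0 + γ • W P μ k 1) - (W P μ k 0 + γ • W P μ k 1) * μ)
          = (-γ) • (μ * W P μ k 1 - W P μ k 1 * μ +
              (P * W P μ k 0 - W P μ k 0 * P)) := by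
            noncomm_ring; match_scalars <;> simp
        _ = 0 := by rw [h1]; simp
    · rw [← sub_eq_zero]
      calc μ * (W P μ k 0 + γ • W P μ k 1) - (W P μ k 0 + γ • W P μ k 1) * μ -
          -(P * (γ • W P μ k 0) - (γ • W P μ k 0) * P)
          = (μ * W P μ k 0 - W P μ k 0 * μ) +
            γ • (μ * W P μ k 1 - W P μ k 1 * μ +
              (P * W P μ k 0 - W P μ k 0 * P)) := by
            noncomm_ring; match_scalars <;> simp
        _ = 0 := by rw [h0, h1]; simp
  · intro k n _ _
    have h1 := W_key P μ k (n + 1)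
    have h2 := W_key P μ k n
    constructor
    · rw [← sub_eq_zero]
      calc (μ - γ • P) * W P μ k (n + 1) - W P μ k (n + 1) * (μ - γ • P) -
          (μ * (W P μ k (n + 1) + γ • W P μ k (n + 2)) -
            (W P μ k (n + 1) + γ • W P μ k (n + 2)) * μ)
          = (-γ) • (μ * W P μ k (n + 2) - W P μ k (n + 2) * μ +
              (P * W P μ k (n + 1) - W P μ k (n + 1) * P)) := by
            noncomm_ring; match_scalars <;> simp
        _ = 0 := by rw [h1]; simp
    · rw [← sub_eq_zero]
      calc μ * (W P μ k (n + 1) + γ • W P μ k (n + 2)) -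
            (W P μ k (n + 1) + γ • W P μ k (n + 2)) * μ -
          -(P * (γ • W P μ k (n + 1) + W P μ k n) -
            (γ • W P μ k (n + 1) + W P μ k n) * P)
          = γ • (μ * W P μ k (n + 2) - W P μ k (n + 2) * μ +
              (P * W P μ k (n + 1) - W P μ k (n + 1) * P)) +
            (μ * W P μ k (n + 1) - W P μ k (n + 1) * μ +
              (P * W P μ k n - W P μ k n * P)) := by
            noncomm_ring; match_scalars <;> simp
        _ = 0 := by rw [h1, h2]; simp
end
end
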